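/- Let A and B be commuting positive definite n×n complex matrices. Then lim_{t → 0⁺} (1/t)·Tr((1-t)A + tB − A^{1-t}B^t) = Tr(A(log A − log B) + B − A). -/

import Mathlib

open Matrix Filter
open scoped ComplexOrder Topology

/-- The real power `A^s` of a positive definite matrix, via the functional calculus. -/
noncomputable def matPow {n : ℕ} (A : Matrix (Fin n) (Fin n) ℂ) (s : ℝ) :
    Matrix (Fin n) (Fin n) ℂ :=
  cfc (fun x : ℝ => x ^ s) A

/-- The logarithm of a positive definite matrix, via the functional calculus. -/
noncomputable def matLog {n : ℕ} (A : Matrix (Fin n) (Fin n) ℂ) : Matrix (Fin n) (Fin n) ℂ :=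
  cfc Real.log A

/-!
Since `A` and `B` commute, so do `log A` and `log B`, and writing the powers as exponentials gives
`A^{1-t} B^t = A · exp (t (log B - log A))`. The trace expression divided by `t` is therefore the
difference quotient at `0` of `t ↦ Re Tr ((1-t)A + tB - A exp (t (log B - log A)))`, a smooth
function vanishing at `0`, and its derivative there is `Re Tr (B - A - A (log B - log A))`.
-/

open NormedSpace

namespace CFC

variable {A : Type*} [NormedRing A] [StarRing A] [NormedAlgebra ℝ A]
  [ContinuousFunctionalCalculus ℝ A IsSelfAdjoint]
  [PartialOrder A] [StarOrderedRing A] [NonnegSpectrumClass ℝ A]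

lemma cfc_rpow_eq_exp_smul_log {a : A} (ha : IsStrictlyPositive a) (s : ℝ) :
    cfc (fun x : ℝ => x ^ s) a = exp (s • log a) := by
  have hne : ∀ x ∈ spectrum ℝ a, x ≠ 0 := fun x hx => (ha.spectrum_pos hx).ne'
  calc cfc (fun x : ℝ => x ^ s) a = cfc (fun x => Real.exp (s * Real.log x)) a :=
        cfc_congr fun x hx => by rw [Real.rpow_def_of_pos (ha.spectrum_pos hx), mul_comm]
    _ = cfc Real.exp (cfc (fun x => s * Real.log x) a) :=
        cfc_comp' Real.exp _ a (by fun_prop) (by fun_prop (disch := assumption))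
    _ = exp (s • log a) := by
        rw [real_exp_eq_normedSpace_exp,
          cfc_const_mul s Real.log a (by fun_prop (disch := assumption)), ← log]

lemma cfc_rpow_one_sub_mul_cfc_rpow [CompleteSpace A] {a b : A} (ha : IsStrictlyPositive a)
    (hb : IsStrictlyPositive b) (hab : Commute a b) (t : ℝ) :
    cfc (fun x : ℝ => x ^ (1 - t)) a * cfc (fun x : ℝ => x ^ t) b =
      a * exp (t • (log b - log a)) := by
  -- `NormedSpace.exp_add_of_commute` is stated for Banach algebras over `ℚ`.
  let : NormedAlgebra ℚ A := NormedAlgebra.restrictScalars ℚ ℝ A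
  have hlog : Commute (log a) (log b) := ((hab.cfc_real Real.log).symm.cfc_real Real.log).symm
  have hsplit : (1 - t) • log a + t • log b = log a + t • (log b - log a) := by module
  rw [cfc_rpow_eq_exp_smul_log ha, cfc_rpow_eq_exp_smul_log hb,
    ← NormedSpace.exp_add_of_commute ((hlog.smul_left _).smul_right _), hsplit,
    NormedSpace.exp_add_of_commute ((hlog.sub_right (Commute.refl _)).smul_right t), exp_log a]

end CFC

theorem tendsto_inv_smul_sub_mul_exp_smul {A : Type*} [NormedRing A] [NormedAlgebra ℝ A]
    [CompleteSpace A] (a b c : A) :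
    Tendsto (fun t : ℝ => t⁻¹ • ((1 - t) • a + t • b - a * exp (t • c))) (𝓝[≠] 0)
      (𝓝 (b - a - a * c)) := by
  have hderiv : HasDerivAt (fun t : ℝ => (1 - t) • a + t • b - a * exp (t • c))
      ((-1 : ℝ) • a + (1 : ℝ) • b - a * (exp ((0 : ℝ) • c) * c)) 0 :=
    ((((hasDerivAt_id 0).const_sub 1).smul_const a).add ((hasDerivAt_id 0).smul_const b)).sub
      ((hasDerivAt_exp_smul_const c 0).const_mul a)
  simpa [neg_add_eq_sub] using hderiv.tendsto_slope_zero

section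

attribute [local instance] Matrix.instL2OpNormedRing Matrix.instL2OpNormedAlgebra
open scoped MatrixOrder

/-- For commuting positive definite `A, B`,
`lim_{t→0⁺} (1/t)·Tr((1-t)A + tB − A^{1-t}B^t) = Tr(A(log A − log B) + B − A)`. -/
theorem tendsto_hellinger_to_relative_entropy {n : ℕ}
    (A B : Matrix (Fin n) (Fin n) ℂ) (hA : A.PosDef) (hB : B.PosDef) (hAB : Commute A B) :
    Tendsto
      (fun t : ℝ =>
        (1 / t) * (((1 - t) • A + t • B - matPow A (1 - t) * matPow B t).trace).re)
      (𝓝[>] 0)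
      (𝓝 (((A * (matLog A - matLog B) + B - A).trace).re)) := by
  have hpow (t : ℝ) : matPow A (1 - t) * matPow B t = A * exp (t • (matLog B - matLog A)) :=
    CFC.cfc_rpow_one_sub_mul_cfc_rpow hA.isStrictlyPositive hB.isStrictlyPositive hAB t
  have hlim := (tendsto_inv_smul_sub_mul_exp_smul A B (matLog B - matLog A)).mono_left
    (nhdsGT_le_nhdsNE 0)
  have hcont : Continuous fun M : Matrix (Fin n) (Fin n) ℂ => M.trace.re := by fun_prop
  convert (hcont.tendsto _).comp hlim using 2 with t
  · rw [Function.comp_apply, hpow, trace_smul, Complex.smul_re, smul_eq_mul, one_div]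
  · congr 2
    noncomm_ring

end
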